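/- The Markov–Fibonacci polynomials satisfy the saturation property: for every n ≥ 1 and all integers i, j, the coefficient A_{i,j}(n) of u^i v^j w^{n−i−j} in Q_n is strictly positive if and only if (i,j) is a lattice point of the Newton polygon of Q_n, i.e. if and only if i ≥ 0, j ≥ 0, i + j ≤ n and n·i + j ≥ n. -/
import Mathlib


open MvPolynomial

/-- The Markov–Fibonacci numerator polynomials `Q n ∈ ℤ[u,v,w]` (with `u = X 0`,
`v = X 1`, `w = X 2`), defined by `Q 0 = 1`, `Q 1 = u + v` and
`Q (n+2) = (u+v+w)·Q (n+1) - v·w·Q n`. `Q n` is the numerator of the Markov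
polynomial `M_{1/n}`. -/
noncomputable def Q : ℕ → MvPolynomial (Fin 3) ℤ
  | 0 => 1
  | 1 => X 0 + X 1
  | (n + 2) => (X 0 + X 1 + X 2) * Q (n + 1) - X 1 * X 2 * Q n

/-- exponent vector of `u^i v^j w^k` -/
noncomputable def M (i j k : ℕ) : Fin 3 →₀ ℕ :=
  Finsupp.single 0 i + Finsupp.single 1 j + Finsupp.single 2 k

lemma M_apply0 (i j k : ℕ) : M i j k 0 = i := by
  simp [M, Finsupp.single_apply]

lemma M_apply1 (i j k : ℕ) : M i j k 1 = j := by
  simp [M, Finsupp.single_apply]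

lemma M_apply2 (i j k : ℕ) : M i j k 2 = k := by
  simp [M, Finsupp.single_apply]

lemma M_eq_iff {i j k i' j' k' : ℕ} : M i j k = M i' j' k' ↔ i = i' ∧ j = j' ∧ k = k' := by
  constructor
  · intro h
    refine ⟨?_, ?_, ?_⟩
    · have := congrFun (congrArg (fun f : Fin 3 →₀ ℕ => (f : Fin 3 → ℕ)) h) 0
      simpa [M_apply0] using this
    · have := congrFun (congrArg (fun f : Fin 3 →₀ ℕ => (f : Fin 3 → ℕ)) h) 1
      simpa [M_apply1] using this
    · have := congrFun (congrArg (fun f : Fin 3 →₀ ℕ => (f : Fin 3 → ℕ)) h) 2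
      simpa [M_apply2] using this
  · rintro ⟨rfl, rfl, rfl⟩; rfl

lemma M_zero : M 0 0 0 = 0 := by simp [M]

lemma M_sub0 (i j k : ℕ) : M (i+1) j k - Finsupp.single 0 1 = M i j k := by
  ext a
  fin_cases a <;>
    simp [Finsupp.tsub_apply, M, Finsupp.single_apply]

lemma M_sub1 (i j k : ℕ) : M i (j+1) k - Finsupp.single 1 1 = M i j k := by
  ext a
  fin_cases a <;>
    simp [Finsupp.tsub_apply, M, Finsupp.single_apply]

lemma M_sub2 (i j k : ℕ) : M i j (k+1) - Finsupp.single 2 1 = M i j k := by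
  ext a
  fin_cases a <;>
    simp [Finsupp.tsub_apply, M, Finsupp.single_apply]

lemma mem0_iff (i j k : ℕ) : (0 : Fin 3) ∈ (M i j k).support ↔ i ≠ 0 := by
  simp [Finsupp.mem_support_iff, M_apply0]

lemma mem1_iff (i j k : ℕ) : (1 : Fin 3) ∈ (M i j k).support ↔ j ≠ 0 := by
  simp [Finsupp.mem_support_iff, M_apply1]

lemma mem2_iff (i j k : ℕ) : (2 : Fin 3) ∈ (M i j k).support ↔ k ≠ 0 := by
  simp [Finsupp.mem_support_iff, M_apply2]

/-- the coefficient of `u^i v^j w^k` in `Q n` -/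
def A (n i j k : ℕ) : ℤ :=
  if i + j + k = n then ((i + j).choose j : ℤ) * ((i + k - 1).choose k) else 0

lemma A_pos_eq {n i j k : ℕ} (h : i + j + k = n) :
    A n i j k = ((i + j).choose j : ℤ) * ((i + k - 1).choose k) := if_pos h

lemma A_rec (m i j k : ℕ) :
    A (m+2) i j k =
      (if i ≠ 0 then A (m+1) (i-1) j k else 0)
      + (if j ≠ 0 then A (m+1) i (j-1) k else 0)
      + (if k ≠ 0 then A (m+1) i j (k-1) else 0)
      - (if j ≠ 0 then (if k ≠ 0 then A m i (j-1) (k-1) else 0) else 0) := by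
  have z : ¬ (0 : ℕ) ≠ 0 := fun h => h rfl
  by_cases h : i + j + k = m + 2
  · rcases i with _ | a <;> rcases j with _ | b <;> rcases k with _ | c
    · omega
    · -- i = 0, j = 0, k = c+1
      simp only [if_neg z, if_pos (Nat.succ_ne_zero c), Nat.add_sub_cancel]
      rw [A_pos_eq h, A_pos_eq (by omega : 0 + 0 + c = m + 1)]
      rw [Nat.choose_eq_zero_of_lt (by omega : (0 : ℕ) + (c+1) - 1 < c + 1),
        Nat.choose_eq_zero_of_lt (by omega : (0 : ℕ) + c - 1 < c)]
      simp
    · -- i = 0, j = b+1, k = 0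
      simp only [if_neg z, if_pos (Nat.succ_ne_zero b), Nat.add_sub_cancel]
      rw [A_pos_eq h, A_pos_eq (by omega : 0 + b + 0 = m + 1)]
      simp [Nat.choose_self]
    · -- i = 0, j = b+1, k = c+1
      simp only [if_neg z, if_pos (Nat.succ_ne_zero b), if_pos (Nat.succ_ne_zero c),
        Nat.add_sub_cancel]
      rw [A_pos_eq h, A_pos_eq (by omega : 0 + b + (c+1) = m + 1),
        A_pos_eq (by omega : 0 + (b+1) + c = m + 1),
        A_pos_eq (by omega : 0 + b + c = m)]
      rw [Nat.choose_eq_zero_of_lt (by omega : (0 : ℕ) + (c+1) - 1 < c + 1)]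
      simp only [Nat.zero_add, Nat.choose_self]
      push_cast
      ring
    · -- i = a+1, j = 0, k = 0
      simp only [if_neg z, if_pos (Nat.succ_ne_zero a), Nat.add_sub_cancel]
      rw [A_pos_eq h, A_pos_eq (by omega : a + 0 + 0 = m + 1)]
      simp [Nat.choose_zero_right]
    · -- i = a+1, j = 0, k = c+1
      simp only [if_neg z, if_pos (Nat.succ_ne_zero a), if_pos (Nat.succ_ne_zero c),
        Nat.add_sub_cancel]
      rw [A_pos_eq h, A_pos_eq (by omega : a + 0 + (c+1) = m + 1),
        A_pos_eq (by omega : (a+1) + 0 + c = m + 1)]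
      rw [show a + 1 + (c + 1) - 1 = (a + c) + 1 from by omega,
        show a + (c + 1) - 1 = a + c from by omega,
        show a + 1 + c - 1 = a + c from by omega,
        Nat.choose_succ_succ' (a + c) c]
      simp only [Nat.choose_zero_right]
      push_cast
      ring
    · -- i = a+1, j = b+1, k = 0
      simp only [if_neg z, if_pos (Nat.succ_ne_zero a), if_pos (Nat.succ_ne_zero b),
        Nat.add_sub_cancel]
      rw [A_pos_eq h, A_pos_eq (by omega : a + (b+1) + 0 = m + 1),
        A_pos_eq (by omega : (a+1) + b + 0 = m + 1)]
      rw [show a + 1 + (b + 1) = (a + b + 1) + 1 from by omega,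
        show a + (b + 1) = a + b + 1 from by omega,
        show a + 1 + b = a + b + 1 from by omega,
        Nat.choose_succ_succ' (a + b + 1) b]
      simp only [Nat.choose_zero_right]
      push_cast
      ring
    · -- i = a+1, j = b+1, k = c+1 (main case)
      simp only [if_pos (Nat.succ_ne_zero a), if_pos (Nat.succ_ne_zero b),
        if_pos (Nat.succ_ne_zero c), Nat.add_sub_cancel]
      rw [A_pos_eq h, A_pos_eq (by omega : a + (b+1) + (c+1) = m + 1),
        A_pos_eq (by omega : (a+1) + b + (c+1) = m + 1),
        A_pos_eq (by omega : (a+1) + (b+1) + c = m + 1),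
        A_pos_eq (by omega : (a+1) + b + c = m)]
      rw [show a + 1 + (b + 1) = (a + b + 1) + 1 from by omega,
        show a + 1 + (c + 1) - 1 = (a + c) + 1 from by omega,
        show a + (b + 1) = a + b + 1 from by omega,
        show a + (c + 1) - 1 = a + c from by omega,
        show a + 1 + b = a + b + 1 from by omega,
        show a + 1 + c - 1 = a + c from by omega,
        Nat.choose_succ_succ' (a + b + 1) b,
        Nat.choose_succ_succ' (a + c) c]
      push_cast
      ring
  · simp only [A]
    split_ifs <;> omega

lemma key : ∀ n i j k, MvPolynomial.coeff (M i j k) (Q n) = A n i j k := by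
  intro n
  induction n using Nat.strong_induction_on with
  | _ n ih =>
    obtain _ | (_ | m) := n
    · intro i j k
      rw [show Q 0 = 1 from rfl, coeff_one]
      by_cases h : i = 0 ∧ j = 0 ∧ k = 0
      · obtain ⟨rfl, rfl, rfl⟩ := h
        rw [if_pos M_zero.symm]
        simp [A]
      · rw [if_neg (by
          intro h0
          rw [← M_zero, M_eq_iff] at h0
          exact h ⟨h0.1.symm, h0.2.1.symm, h0.2.2.symm⟩)]
        rw [A, if_neg (by omega)]
    · intro i j k
      rw [show Q 1 = X 0 + X 1 from rfl, coeff_add, coeff_X', coeff_X']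
      have h0 : Finsupp.single (0 : Fin 3) 1 = M 1 0 0 := by simp [M]
      have h1 : Finsupp.single (1 : Fin 3) 1 = M 0 1 0 := by simp [M]
      rw [h0, h1]
      by_cases hA : i = 1 ∧ j = 0 ∧ k = 0
      · obtain ⟨rfl, rfl, rfl⟩ := hA
        rw [if_pos rfl, if_neg (by rw [M_eq_iff]; omega)]
        simp [A]
      · by_cases hB : i = 0 ∧ j = 1 ∧ k = 0
        · obtain ⟨rfl, rfl, rfl⟩ := hB
          rw [if_neg (by rw [M_eq_iff]; omega), if_pos rfl]
          simp [A]
        · rw [if_neg (by rw [M_eq_iff]; omega), if_neg (by rw [M_eq_iff]; omega)]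
          rw [A]
          split_ifs with h
          · have hk : i = 0 ∧ j = 0 ∧ k = 1 := by omega
            obtain ⟨rfl, rfl, rfl⟩ := hk
            simp
          · simp
    · intro i j k
      show MvPolynomial.coeff (M i j k) (Q (m + 2)) = A (m + 2) i j k
      have eq2 : Q (m + 2) = (X 0 + X 1 + X 2) * Q (m + 1) - X 1 * X 2 * Q m := rfl
      have ih1 := ih (m + 1) (by omega)
      have ih0 := ih m (by omega)
      have h0 : MvPolynomial.coeff (M i j k) (X 0 * Q (m+1)) =
          if i ≠ 0 then A (m+1) (i-1) j k else 0 := by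
        rcases i with _ | a
        · rw [coeff_X_mul']
          simp [Finsupp.mem_support_iff, M_apply0]
        · rw [coeff_X_mul', if_pos ((mem0_iff _ _ _).2 (Nat.succ_ne_zero a)), M_sub0, ih1]
          simp
      have h1 : MvPolynomial.coeff (M i j k) (X 1 * Q (m+1)) =
          if j ≠ 0 then A (m+1) i (j-1) k else 0 := by
        rcases j with _ | b
        · rw [coeff_X_mul']
          simp [Finsupp.mem_support_iff, M_apply1]
        · rw [coeff_X_mul', if_pos ((mem1_iff _ _ _).2 (Nat.succ_ne_zero b)), M_sub1, ih1]
          simp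
      have h2 : MvPolynomial.coeff (M i j k) (X 2 * Q (m+1)) =
          if k ≠ 0 then A (m+1) i j (k-1) else 0 := by
        rcases k with _ | c
        · rw [coeff_X_mul']
          simp [Finsupp.mem_support_iff, M_apply2]
        · rw [coeff_X_mul', if_pos ((mem2_iff _ _ _).2 (Nat.succ_ne_zero c)), M_sub2, ih1]
          simp
      have hvw : MvPolynomial.coeff (M i j k) (X 1 * X 2 * Q m) =
          if j ≠ 0 then (if k ≠ 0 then A m i (j-1) (k-1) else 0) else 0 := by
        rcases j with _ | b
        · rw [mul_assoc, coeff_X_mul']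
          simp [Finsupp.mem_support_iff, M_apply1]
        · rw [mul_assoc, coeff_X_mul', if_pos ((mem1_iff _ _ _).2 (Nat.succ_ne_zero b)),
            M_sub1, coeff_X_mul']
          rcases k with _ | c
          · simp [Finsupp.mem_support_iff, M_apply2]
          · rw [if_pos ((mem2_iff _ _ _).2 (Nat.succ_ne_zero c)), M_sub2, ih0]
            simp
      rw [eq2, coeff_sub, add_mul, add_mul, coeff_add, coeff_add, h0, h1, h2, hvw, A_rec]

theorem fibonacci_saturation (n : ℕ) (hn : 1 ≤ n) (i j : ℕ) :
    0 < MvPolynomial.coeff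
        (Finsupp.single 0 i + Finsupp.single 1 j + Finsupp.single 2 (n - i - j)) (Q n)
      ↔ i + j ≤ n ∧ n ≤ n * i + j := by
  have hM : (Finsupp.single 0 i + Finsupp.single 1 j + Finsupp.single 2 (n - i - j)
      : Fin 3 →₀ ℕ) = M i j (n - i - j) := rfl
  rw [hM, key]
  by_cases hle : i + j ≤ n
  · rw [A_pos_eq (by omega : i + j + (n - i - j) = n)]
    set k := n - i - j with hk
    constructor
    · intro hpos
      refine ⟨hle, ?_⟩
      rcases Nat.eq_zero_or_pos i with rfl | hi
      · by_contra hcon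
        have hkpos : 1 ≤ k := by omega
        rw [Nat.choose_eq_zero_of_lt (by omega : 0 + k - 1 < k)] at hpos
        simp at hpos
      · calc n = n * 1 := (mul_one n).symm
          _ ≤ n * i := Nat.mul_le_mul_left n hi
          _ ≤ n * i + j := Nat.le_add_right _ _
    · rintro ⟨-, hge⟩
      have hpos2 : 0 < (i + k - 1).choose k := by
        rcases Nat.eq_zero_or_pos i with rfl | hi
        · have hj : j = n := by
            have : n ≤ j := by simpa using hge
            omega
          have : k = 0 := by omega
          rw [this]
          simp
        · exact Nat.choose_pos (by omega)
      have hpos1 : 0 < (i + j).choose j := Nat.choose_pos (Nat.le_add_left j i)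
      exact mul_pos (by exact_mod_cast hpos1) (by exact_mod_cast hpos2)
  · rw [A, if_neg (by omega)]
    exact iff_of_false (lt_irrefl 0) (fun h => hle h.1)
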